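/- In the octonion-like algebra, any right inverse is also a left inverse: for all X, W in A, if X·W = e₀ then W·X = e₀. -/
import Mathlib


noncomputable section

/-- Standard basis vectors of `A := Fin 8 → ℝ`: `e i j = 1` if `i = j`, else `0`. -/
def e (i : Fin 8) : Fin 8 → ℝ := fun j => if i = j then 1 else 0

/-- The octonion-like (split-biquaternion) product on `Fin 8 → ℝ`: the unique bilinear
multiplication determined by the multiplication table on the basis `e 0, …, e 7`
(with `e 0` the two-sided identity, `e 7 · e 7 = e 0`, `e i · e i = -e 0` for `1 ≤ i ≤ 6`, etc.),
written out in coordinates. -/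
def omul (X Y : Fin 8 → ℝ) : Fin 8 → ℝ :=
  ![X 0*Y 0 - X 1*Y 1 - X 2*Y 2 - X 3*Y 3 - X 4*Y 4 - X 5*Y 5 - X 6*Y 6 + X 7*Y 7,
    X 1*Y 0 + X 0*Y 1 - X 3*Y 2 + X 2*Y 3 + X 5*Y 4 - X 4*Y 5 - X 7*Y 6 - X 6*Y 7,
    X 2*Y 0 + X 3*Y 1 + X 0*Y 2 - X 1*Y 3 - X 6*Y 4 - X 7*Y 5 + X 4*Y 6 - X 5*Y 7,
    X 3*Y 0 - X 2*Y 1 + X 1*Y 2 + X 0*Y 3 - X 7*Y 4 + X 6*Y 5 - X 5*Y 6 - X 4*Y 7,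
    X 4*Y 0 - X 5*Y 1 + X 6*Y 2 - X 7*Y 3 + X 0*Y 4 + X 1*Y 5 - X 2*Y 6 - X 3*Y 7,
    X 5*Y 0 + X 4*Y 1 - X 7*Y 2 - X 6*Y 3 - X 1*Y 4 + X 0*Y 5 + X 3*Y 6 - X 2*Y 7,
    X 6*Y 0 - X 7*Y 1 - X 4*Y 2 + X 5*Y 3 + X 2*Y 4 - X 3*Y 5 + X 0*Y 6 - X 1*Y 7,
    X 7*Y 0 + X 6*Y 1 + X 5*Y 2 + X 4*Y 3 + X 3*Y 4 + X 2*Y 5 + X 1*Y 6 + X 0*Y 7]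

/-- The conjugate (reverse) of `X`: negate the six imaginary coordinates `1,…,6`. -/
def oconj (X : Fin 8 → ℝ) : Fin 8 → ℝ :=
  ![X 0, -X 1, -X 2, -X 3, -X 4, -X 5, -X 6, X 7]

/-- `a(X) = ∑ i, (X i)²`. -/
def aQ (X : Fin 8 → ℝ) : ℝ := ∑ i, (X i)^2

/-- `b(X) = 2 X₀X₇ − 2 (X₁X₆ + X₂X₅ + X₃X₄)`. -/
def bQ (X : Fin 8 → ℝ) : ℝ := 2*(X 0)*(X 7) - 2*((X 1)*(X 6) + (X 2)*(X 5) + (X 3)*(X 4))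

/-- Squared seminorm `N_λ(X) = a(X) + λ·b(X)` (used with `λ = 1` and `λ = -1`). -/
def Nsq (lam : ℝ) (X : Fin 8 → ℝ) : ℝ := aQ X + lam * bQ X

/-- Matrix of left multiplication by `X`: column `j` is the coordinate vector of `X · eⱼ`. -/
def MX (X : Fin 8 → ℝ) : Matrix (Fin 8) (Fin 8) ℝ := Matrix.of fun i j => omul X (e j) i

/-- Matrix of right multiplication by `X`: column `j` is the coordinate vector of `eⱼ · X`. -/
def PX (X : Fin 8 → ℝ) : Matrix (Fin 8) (Fin 8) ℝ := Matrix.of fun i j => omul (e j) X i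

/-- The matrix `J` with `J 0 7 = J 7 0 = 1`, `J i (7-i) = -1` for `1 ≤ i ≤ 6`, else `0`. -/
def J : Matrix (Fin 8) (Fin 8) ℝ :=
  !![0, 0, 0, 0, 0, 0, 0, 1;
     0, 0, 0, 0, 0, 0, -1, 0;
     0, 0, 0, 0, 0, -1, 0, 0;
     0, 0, 0, 0, -1, 0, 0, 0;
     0, 0, 0, -1, 0, 0, 0, 0;
     0, 0, -1, 0, 0, 0, 0, 0;
     0, -1, 0, 0, 0, 0, 0, 0;
     1, 0, 0, 0, 0, 0, 0, 0]


set_option maxHeartbeats 1000000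

@[simp] lemma cons_val_five' {α : Type*} {m : ℕ} (x : α) (u : Fin (m+5) → α) :
    Matrix.vecCons x u 5 =
      Matrix.vecHead (Matrix.vecTail (Matrix.vecTail (Matrix.vecTail (Matrix.vecTail u)))) := rfl
@[simp] lemma cons_val_six' {α : Type*} {m : ℕ} (x : α) (u : Fin (m+6) → α) :
    Matrix.vecCons x u 6 =
      Matrix.vecHead (Matrix.vecTail (Matrix.vecTail (Matrix.vecTail
        (Matrix.vecTail (Matrix.vecTail u))))) := rfl
@[simp] lemma cons_val_seven' {α : Type*} {m : ℕ} (x : α) (u : Fin (m+7) → α) :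
    Matrix.vecCons x u 7 =
      Matrix.vecHead (Matrix.vecTail (Matrix.vecTail (Matrix.vecTail
        (Matrix.vecTail (Matrix.vecTail (Matrix.vecTail u)))))) := rfl

lemma omul_assoc (a b c : Fin 8 → ℝ) : omul (omul a b) c = omul a (omul b c) := by
  funext i
  fin_cases i <;> (simp [omul, Matrix.vecHead, Matrix.vecTail]; ring)

lemma omul_one (X : Fin 8 → ℝ) : omul X (e 0) = X := by
  funext i
  fin_cases i <;>
    simp (config := { decide := true }) [omul, e, Matrix.vecHead, Matrix.vecTail]

lemma one_omul (X : Fin 8 → ℝ) : omul (e 0) X = X := by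
  funext i
  fin_cases i <;>
    simp (config := { decide := true }) [omul, e, Matrix.vecHead, Matrix.vecTail]

lemma oconj_omul (X Y : Fin 8 → ℝ) : oconj (omul X Y) = omul (oconj Y) (oconj X) := by
  funext i
  fin_cases i <;> (simp [omul, oconj, Matrix.vecHead, Matrix.vecTail]; ring)

lemma oconj_one : oconj (e 0) = e 0 := by
  funext i
  fin_cases i <;>
    simp (config := { decide := true }) [oconj, e, Matrix.vecHead, Matrix.vecTail]

lemma self_oconj_comm (X : Fin 8 → ℝ) : omul X (oconj X) = omul (oconj X) X := by
  funext i
  fin_cases i <;> (simp [omul, oconj, Matrix.vecHead, Matrix.vecTail]; try ring)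

lemma norm_central (X Z : Fin 8 → ℝ) :
    omul (omul X (oconj X)) Z = omul Z (omul X (oconj X)) := by
  funext i
  fin_cases i <;> (simp [omul, oconj, Matrix.vecHead, Matrix.vecTail]; ring)

/-- Any right inverse is also a left inverse. -/
theorem right_inv_is_left_inv (X W : Fin 8 → ℝ) (h : omul X W = e 0) :
    omul W X = e 0 := by
  -- conjugate of the hypothesis
  have hc : omul (oconj W) (oconj X) = e 0 := by
    rw [← oconj_omul, h, oconj_one]
  set s := omul X (oconj X) with hs
  set q := omul W (oconj W) with hq
  -- s · (W·X) = s
  have hsu : omul s (omul W X) = s := by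
    have h1 : omul s W = oconj X := by
      rw [hs, self_oconj_comm, omul_assoc, h, omul_one]
    rw [← omul_assoc, h1, ← self_oconj_comm, ← hs]
  -- s · q = 1
  have hsq : omul s q = e 0 := by
    have h2 : omul (oconj X) q = W := by
      rw [hq, ← norm_central W (oconj X), omul_assoc, hc, omul_one]
    rw [hs, omul_assoc, h2, h]
  -- q · s = 1
  have hqs : omul q s = e 0 := by
    rw [hs, ← norm_central X q, ← hs]; exact hsq
  -- conclude
  calc omul W X = omul (e 0) (omul W X) := (one_omul _).symm
    _ = omul (omul q s) (omul W X) := by rw [hqs]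
    _ = omul q (omul s (omul W X)) := omul_assoc _ _ _
    _ = omul q s := by rw [hsu]
    _ = e 0 := hqs
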